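/- arXiv:1103.2043 — 2 statements merged into one kernel-verified Lean document; each statement's English description precedes it below -/
import Mathlib

section
/- Suppose a + b = c + d. Then for every n ≥ 1, all real numbers k_1, ..., k_n, and every integer m with 1 ≤ m ≤ n, one has Σ_{i=1}^{2^n} x_i^m = Σ_{i=1}^{2^n} y_i^m. In other words, the numbers x_1, ..., x_{2^n} and y_1, ..., y_{2^n} satisfy the full symmetric system of exponential identities for all powers from 1 up to n. -/
/-- The pair of sequences `(x^{(t+1)}, y^{(t+1)})` of length `2^(t+1)` (0-based internal
level `t` corresponds to the paper's level `m = t + 1`).  `(seqXY a b c d k t i).1` is the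
`i`-th entry (0-based) of `x^{(t+1)}` and `.2` that of `y^{(t+1)}`. -/
noncomputable def seqXY (a b c d : ℝ) (k : ℕ → ℝ) : ℕ → ℕ → ℝ × ℝ
  | 0, i => if i = 0 then (a + k 1, c + k 1) else (b + k 1, d + k 1)
  | t + 1, i =>
      if i < 2 ^ (t + 1) then seqXY a b c d k t i
      else ((seqXY a b c d k t (i - 2 ^ (t + 1))).2 + k (t + 2),
            (seqXY a b c d k t (i - 2 ^ (t + 1))).1 + k (t + 2))

/-- `X a b c d k n i` is the entry `x_{i+1}` of the sequence `x^{(n)}` (for `n ≥ 1`,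
`0 ≤ i < 2^n`). -/
noncomputable def X (a b c d : ℝ) (k : ℕ → ℝ) (n i : ℕ) : ℝ :=
  (seqXY a b c d k (n - 1) i).1

/-- `Y a b c d k n i` is the entry `y_{i+1}` of the sequence `y^{(n)}` (for `n ≥ 1`,
`0 ≤ i < 2^n`). -/
noncomputable def Y (a b c d : ℝ) (k : ℕ → ℝ) (n i : ℕ) : ℝ :=
  (seqXY a b c d k (n - 1) i).2

/-!
If `x` and `y` have equal power sums in degrees `< m`, then by the binomial theorem shifting
both by the same constant leaves the difference of their `m`-th power sums unchanged. So in
passing from `(x, y)` to `(x ++ (y + κ), y ++ (x + κ))` the degree-`m` differences of the two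
halves cancel, and equal power sums in degrees `≤ t` become equal power sums in degrees
`≤ t + 1`. For the initial pairs `(a, b)`, `(c, d)`, equality in degrees `≤ 1` is `a + b = c + d`.
-/

open Finset

lemma sum_add_pow_sub_sum_add_pow {ι R : Type*} [CommRing R] (s : Finset ι) (u v : ι → R)
    (κ : R) {m : ℕ} (h : ∀ j < m, ∑ i ∈ s, u i ^ j = ∑ i ∈ s, v i ^ j) :
    ∑ i ∈ s, (u i + κ) ^ m - ∑ i ∈ s, (v i + κ) ^ m =
      ∑ i ∈ s, u i ^ m - ∑ i ∈ s, v i ^ m := by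
  simp_rw [add_pow]
  rw [sum_comm, sum_comm (s := s), sum_range_succ, sum_range_succ]
  have hlow : ∀ j ∈ range m, ∑ i ∈ s, u i ^ j * κ ^ (m - j) * m.choose j =
      ∑ i ∈ s, v i ^ j * κ ^ (m - j) * m.choose j := fun j hj => by
    simp_rw [← sum_mul, h j (mem_range.mp hj)]
  rw [sum_congr rfl hlow]
  simp

lemma sum_range_seqXY_succ (a b c d : ℝ) (k : ℕ → ℝ) (t : ℕ) (f : ℝ × ℝ → ℝ) :
    ∑ i ∈ range (2 ^ (t + 2)), f (seqXY a b c d k (t + 1) i) =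
      ∑ i ∈ range (2 ^ (t + 1)), f (seqXY a b c d k t i) +
        ∑ i ∈ range (2 ^ (t + 1)),
          f ((seqXY a b c d k t i).2 + k (t + 2), (seqXY a b c d k t i).1 + k (t + 2)) := by
  rw [pow_succ, mul_two, sum_range_add]
  congr 1
  · refine sum_congr rfl fun i hi => ?_
    rw [seqXY, if_pos (mem_range.mp hi)]
  · refine sum_congr rfl fun i _ => ?_
    rw [seqXY, if_neg (by omega), Nat.add_sub_cancel_left]

lemma sum_range_seqXY_pow_eq (a b c d : ℝ) (h : a + b = c + d) (k : ℕ → ℝ) (t : ℕ) :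
    ∀ m ≤ t + 1, ∑ i ∈ range (2 ^ (t + 1)), (seqXY a b c d k t i).1 ^ m =
      ∑ i ∈ range (2 ^ (t + 1)), (seqXY a b c d k t i).2 ^ m := by
  induction t with
  | zero =>
    intro m hm
    interval_cases m
    · simp
    · simp [seqXY, sum_range_succ]
      linarith
  | succ t ih =>
    intro m hm
    rw [sum_range_seqXY_succ a b c d k t (·.1 ^ m), sum_range_seqXY_succ a b c d k t (·.2 ^ m)]
    have hshift := sum_add_pow_sub_sum_add_pow (range (2 ^ (t + 1)))
      (fun i => (seqXY a b c d k t i).2) (fun i => (seqXY a b c d k t i).1) (k (t + 2))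
      (m := m) fun j hj => (ih j (by omega)).symm
    simp only at hshift ⊢
    linarith

theorem full_symmetric_system_general (a b c d : ℝ) (h : a + b = c + d)
    (n : ℕ) (hn : 1 ≤ n) (k : ℕ → ℝ) (m : ℕ) (hmn : m ≤ n) :
    ∑ i ∈ Finset.range (2 ^ n), X a b c d k n i ^ m =
      ∑ i ∈ Finset.range (2 ^ n), Y a b c d k n i ^ m := by
  obtain ⟨t, rfl⟩ : ∃ t, n = t + 1 := ⟨n - 1, by omega⟩
  exact sum_range_seqXY_pow_eq a b c d h k t m hmn

theorem full_symmetric_system (a b c d : ℝ) (h : a + b = c + d)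
    (n : ℕ) (hn : 1 ≤ n) (k : ℕ → ℝ) (m : ℕ) (hm1 : 1 ≤ m) (hmn : m ≤ n) :
    ∑ i ∈ Finset.range (2 ^ n), X a b c d k n i ^ m =
      ∑ i ∈ Finset.range (2 ^ n), Y a b c d k n i ^ m :=
  full_symmetric_system_general a b c d h n hn k m hmn
end

section
/- Suppose a + b = c + d. Then for every integer i with 1 ≤ i ≤ n and every integer p with 0 ≤ p ≤ 2^{n-i} − 1, the block subsums of i-th powers agree: Σ_{j = p·2^i + 1}^{(p+1)·2^i} x_j^i = Σ_{j = p·2^i + 1}^{(p+1)·2^i} y_j^i. That is, the symmetry holds not only for the whole sums but for every consecutive block of length 2^i. -/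
open Finset

section PowerSums

variable {ι R : Type*} [CommRing R] {s : Finset ι} {f g : ι → R} {r : ℕ}

def PowerSumsAgree (s : Finset ι) (f g : ι → R) (r : ℕ) : Prop :=
  ∀ u ≤ r, ∑ i ∈ s, f i ^ u = ∑ i ∈ s, g i ^ u

theorem sum_add_pow_sub_sum_pow_eq (hfg : ∀ u < r, ∑ i ∈ s, f i ^ u = ∑ i ∈ s, g i ^ u)
    (C : R) :
    ∑ i ∈ s, (f i + C) ^ r - ∑ i ∈ s, f i ^ r = ∑ i ∈ s, (g i + C) ^ r - ∑ i ∈ s, g i ^ r := by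
  have expand : ∀ h : ι → R, ∑ i ∈ s, (h i + C) ^ r - ∑ i ∈ s, h i ^ r =
      ∑ u ∈ range r, (∑ i ∈ s, h i ^ u) * C ^ (r - u) * r.choose u := by
    intro h
    simp only [add_pow, sum_range_succ, Nat.sub_self, pow_zero, Nat.choose_self, Nat.cast_one,
      mul_one, sum_add_distrib, add_sub_cancel_right, sum_mul]
    exact sum_comm
  rw [expand f, expand g]
  exact sum_congr rfl fun u hu => by rw [hfg u (mem_range.mp hu)]

theorem PowerSumsAgree.symm (h : PowerSumsAgree s f g r) : PowerSumsAgree s g f r :=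
  fun u hu => (h u hu).symm

theorem PowerSumsAgree.congr {f' g' : ι → R} (h : PowerSumsAgree s f g r)
    (hf : Set.EqOn f f' s) (hg : Set.EqOn g g' s) : PowerSumsAgree s f' g' r := fun u hu => by
  rw [← sum_congr rfl fun i hi => congrArg (· ^ u) (hf hi),
    ← sum_congr rfl fun i hi => congrArg (· ^ u) (hg hi)]
  exact h u hu

theorem PowerSumsAgree.add_const (h : PowerSumsAgree s f g r) (C : R) :
    PowerSumsAgree s (fun i => f i + C) (fun i => g i + C) r := fun u hu => by
  have := sum_add_pow_sub_sum_pow_eq (fun v hv => h v (by omega)) C (r := u)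
  rwa [h u hu, sub_left_inj] at this

theorem PowerSumsAgree.sum_pow_add_sum_add_pow_comm (h : PowerSumsAgree s f g r) (C : R)
    {u : ℕ} (hu : u ≤ r + 1) :
    ∑ i ∈ s, f i ^ u + ∑ i ∈ s, (g i + C) ^ u = ∑ i ∈ s, g i ^ u + ∑ i ∈ s, (f i + C) ^ u := by
  have := sum_add_pow_sub_sum_pow_eq (fun v hv => h v (by omega)) C (r := u)
  linear_combination -this

end PowerSums

section Construction

variable (a b c d : ℝ) (k : ℕ → ℝ)

theorem seqXY_succ_of_lt {t j : ℕ} (hj : j < 2 ^ (t + 1)) :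
    seqXY a b c d k (t + 1) j = seqXY a b c d k t j := by
  simp [seqXY, hj]

theorem seqXY_succ_two_pow_add (t j : ℕ) :
    seqXY a b c d k (t + 1) (2 ^ (t + 1) + j) =
      ((seqXY a b c d k t j).2 + k (t + 2), (seqXY a b c d k t j).1 + k (t + 2)) := by
  simp [seqXY]

theorem powerSumsAgree_seqXY (h : a + b = c + d) (t : ℕ) :
    PowerSumsAgree (range (2 ^ (t + 1))) (fun j => (seqXY a b c d k t j).1)
      (fun j => (seqXY a b c d k t j).2) (t + 1) := by
  induction t with
  | zero =>
    intro u hu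
    interval_cases u
    · simp
    · simp [seqXY, sum_range_succ]
      linarith
  | succ t ih =>
    intro u hu
    have split : ∀ F : ℕ → ℝ, ∑ j ∈ range (2 ^ (t + 2)), F j =
        ∑ j ∈ range (2 ^ (t + 1)), F j + ∑ j ∈ range (2 ^ (t + 1)), F (2 ^ (t + 1) + j) := by
      intro F
      rw [pow_succ _ (t + 1), mul_two, sum_range_add]
    have first_half : ∀ F : ℝ × ℝ → ℝ, ∑ j ∈ range (2 ^ (t + 1)), F (seqXY a b c d k (t + 1) j) =
        ∑ j ∈ range (2 ^ (t + 1)), F (seqXY a b c d k t j) :=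
      fun F => sum_congr rfl fun j hj => by rw [seqXY_succ_of_lt a b c d k (mem_range.mp hj)]
    rw [split, split, first_half (·.1 ^ u), first_half (·.2 ^ u)]
    simp only [seqXY_succ_two_pow_add]
    exact ih.sum_pow_add_sum_add_pow_comm (k (t + 2)) hu

theorem powerSumsAgree_seqXY_block (h : a + b = c + d) (s e p : ℕ) (hp : p < 2 ^ e) :
    PowerSumsAgree (range (2 ^ (s + 1)))
      (fun j => (seqXY a b c d k (s + e) (p * 2 ^ (s + 1) + j)).1)
      (fun j => (seqXY a b c d k (s + e) (p * 2 ^ (s + 1) + j)).2) (s + 1) := by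
  induction e generalizing p with
  | zero =>
    obtain rfl : p = 0 := by simpa using hp
    simpa using powerSumsAgree_seqXY a b c d k h s
  | succ e ih =>
    rw [← add_assoc]
    have two_pow : 2 ^ (s + e + 1) = 2 ^ e * 2 ^ (s + 1) := by ring
    rcases lt_or_ge p (2 ^ e) with hp' | hp'
    · have lower : ∀ j ∈ range (2 ^ (s + 1)),
          seqXY a b c d k (s + e + 1) (p * 2 ^ (s + 1) + j) =
            seqXY a b c d k (s + e) (p * 2 ^ (s + 1) + j) := by
        intro j hj
        apply seqXY_succ_of_lt
        rw [two_pow]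
        nlinarith [mem_range.mp hj]
      exact (ih p hp').congr (fun j hj => by rw [lower j hj]) fun j hj => by rw [lower j hj]
    · obtain ⟨q, rfl⟩ := Nat.exists_eq_add_of_le hp'
      have upper : ∀ j, (2 ^ e + q) * 2 ^ (s + 1) + j = 2 ^ (s + e + 1) + (q * 2 ^ (s + 1) + j) := by
        intro j
        rw [two_pow]
        ring
      simp only [upper, seqXY_succ_two_pow_add]
      exact ((ih q (by rw [pow_succ] at hp; omega)).add_const _).symm

end Construction

theorem block_subsums_eq_general (a b c d : ℝ) (h : a + b = c + d)
    (n : ℕ) (k : ℕ → ℝ)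
    (i : ℕ) (hi1 : 1 ≤ i) (hin : i ≤ n)
    (p : ℕ) (hp : p ≤ 2 ^ (n - i) - 1) :
    ∑ j ∈ Finset.Ico (p * 2 ^ i) ((p + 1) * 2 ^ i), X a b c d k n j ^ i =
      ∑ j ∈ Finset.Ico (p * 2 ^ i) ((p + 1) * 2 ^ i), Y a b c d k n j ^ i := by
  obtain ⟨s, rfl⟩ : ∃ s, i = s + 1 := ⟨i - 1, by omega⟩
  obtain ⟨e, rfl⟩ : ∃ e, n = s + e + 1 := ⟨n - s - 1, by omega⟩
  have hp' : p < 2 ^ e := by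
    rw [show s + e + 1 - (s + 1) = e by omega] at hp
    have := Nat.two_pow_pos e
    omega
  have block_len : (p + 1) * 2 ^ (s + 1) - p * 2 ^ (s + 1) = 2 ^ (s + 1) := by
    rw [add_mul, one_mul, Nat.add_sub_cancel_left]
  rw [sum_Ico_eq_sum_range, sum_Ico_eq_sum_range, block_len]
  simpa [X, Y] using powerSumsAgree_seqXY_block a b c d k h s e p hp' (s + 1) le_rfl

theorem block_subsums_eq (a b c d : ℝ) (h : a + b = c + d)
    (n : ℕ) (hn : 1 ≤ n) (k : ℕ → ℝ)
    (i : ℕ) (hi1 : 1 ≤ i) (hin : i ≤ n)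
    (p : ℕ) (hp : p ≤ 2 ^ (n - i) - 1) :
    ∑ j ∈ Finset.Ico (p * 2 ^ i) ((p + 1) * 2 ^ i), X a b c d k n j ^ i =
      ∑ j ∈ Finset.Ico (p * 2 ^ i) ((p + 1) * 2 ^ i), Y a b c d k n j ^ i :=
  block_subsums_eq_general a b c d h n k i hi1 hin p hp
end
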